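/- arXiv:1602.07819 — 2 statements merged into one kernel-verified Lean document; each statement's English description precedes it below -/
import Mathlib

section
/- Let n = 2m + r with m ≥ 1, τ ∈ {1,−1}, let J_c be the complex-type Jordan block of size 2m associated with a pair a ± bi with b ≠ 0, let A', D' be r×r real symmetric matrices, and set A = blockDiag(τE_{2m}, A') and D = blockDiag(τE_{2m}J_c, D'). Let b, e ∈ ℝⁿ and c ∈ ℝ, and suppose the Slater condition holds. Then problem (P) is unbounded from below. -/
/-!
Inside the `2m`-block pick `w` with `wᵀ E w = 0` and `τ wᵀ E J_c w < 0`: for `m = 1` a coordinate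
vector chosen by the sign of `τ b`, for `m ≥ 2` the vector `e₁ - τ b e_{2m-1}`, on whose span
`E` vanishes while `E J_c` picks up the two entries `b`. Extended by zero, `w` is an
`A`-isotropic direction `d` with `dᵀ D d < 0`. Along the ray from a Slater point in direction
`±d` the constraint is affine in the step, hence stays feasible for one choice of sign, while
the objective is a quadratic in the step with negative leading coefficient.
-/

open Matrix

/-- The `m × m` anti-diagonal matrix `E_m`: `(E_m)_{i,j} = 1` iff `i + j = m + 1`
(with 1-based indexing). -/
noncomputable def Emat (m : ℕ) : Matrix (Fin m) (Fin m) ℝ :=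
  fun i j => if (i : ℕ) + (j : ℕ) + 1 = m then 1 else 0

/-- The real `d × d` matrix (for even `d = 2m`) consisting of `m` copies of the `2 × 2` block
`[[a, −b], [b, a]]` on the block diagonal and `2 × 2` identity blocks on the block
superdiagonal: the complex-type Jordan block associated with the complex pair `a ± b i`. -/
noncomputable def complexJordanBlock (d : ℕ) (a b : ℝ) : Matrix (Fin d) (Fin d) ℝ :=
  fun i j =>
    if (i : ℕ) / 2 = (j : ℕ) / 2 then
      (if (i : ℕ) % 2 = (j : ℕ) % 2 then a else if (i : ℕ) % 2 = 0 then -b else b)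
    else if (i : ℕ) / 2 + 1 = (j : ℕ) / 2 then
      (if (i : ℕ) % 2 = (j : ℕ) % 2 then 1 else 0)
    else 0

open Filter

section QuadraticFunction

variable {n : Type*} [Fintype n]

noncomputable def quadFun (A : Matrix n n ℝ) (b : n → ℝ) (c : ℝ) (x : n → ℝ) : ℝ :=
  (1 / 2) * (x ⬝ᵥ A *ᵥ x) + b ⬝ᵥ x + c

theorem quadFun_add_smul (A : Matrix n n ℝ) (b : n → ℝ) (c : ℝ) (x d : n → ℝ) (t : ℝ) :
    quadFun A b c (x + t • d) = quadFun A b c x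
      + ((1 / 2) * (x ⬝ᵥ A *ᵥ d + d ⬝ᵥ A *ᵥ x) + b ⬝ᵥ d) * t
      + (1 / 2) * (d ⬝ᵥ A *ᵥ d) * t ^ 2 := by
  simp only [quadFun, mulVec_add, mulVec_smul, dotProduct_add, add_dotProduct, dotProduct_smul,
    smul_dotProduct, smul_eq_mul]
  ring

theorem exists_nonneg_add_mul_add_mul_sq_lt {α β γ : ℝ} (hγ : γ < 0) (M : ℝ) :
    ∃ t : ℝ, 0 ≤ t ∧ α + β * t + γ * t ^ 2 < M := by
  have hlim : Tendsto (fun t : ℝ => α + t * (β + γ * t)) atTop atBot :=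
    tendsto_atBot_add_const_left _ _ <| tendsto_id.atTop_mul_atBot₀ <|
      tendsto_atBot_add_const_left _ _ <| tendsto_id.const_mul_atTop_of_neg hγ
  obtain ⟨t, hlt, hnonneg⟩ :=
    ((hlim.eventually (eventually_lt_atBot M)).and (eventually_ge_atTop 0)).exists
  exact ⟨t, hnonneg, by linarith⟩

theorem exists_quadFun_nonpos_and_lt_of_isotropic (A D : Matrix n n ℝ) (b e : n → ℝ) (c : ℝ)
    {x d : n → ℝ} (hx : quadFun A b c x ≤ 0) (hA : d ⬝ᵥ A *ᵥ d = 0) (hD : d ⬝ᵥ D *ᵥ d < 0)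
    (M : ℝ) : ∃ y, quadFun A b c y ≤ 0 ∧ quadFun D e 0 y < M := by
  wlog hslope : (1 / 2) * (x ⬝ᵥ A *ᵥ d + d ⬝ᵥ A *ᵥ x) + b ⬝ᵥ d ≤ 0 generalizing d
  · refine this (d := -d) (by simpa [mulVec_neg] using hA) (by simpa [mulVec_neg] using hD) ?_
    simp only [mulVec_neg, dotProduct_neg, neg_dotProduct]
    linarith
  have hγ : (1 / 2) * (d ⬝ᵥ D *ᵥ d) < 0 := by linarith
  obtain ⟨t, ht, hlt⟩ := exists_nonneg_add_mul_add_mul_sq_lt (α := quadFun D e 0 x)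
    (β := (1 / 2) * (x ⬝ᵥ D *ᵥ d + d ⬝ᵥ D *ᵥ x) + e ⬝ᵥ d) hγ M
  refine ⟨x + t • d, ?_, ?_⟩
  · rw [quadFun_add_smul, hA]
    nlinarith
  · rwa [quadFun_add_smul]

end QuadraticFunction

section BlockMatrix

variable {R : Type*} [CommSemiring R]

theorem single_dotProduct_mulVec_single {n : Type*} [Fintype n] [DecidableEq n]
    (M : Matrix n n R) (i j : n) (x y : R) :
    Pi.single i x ⬝ᵥ M *ᵥ Pi.single j y = x * M i j * y := by
  rw [mulVec_single, single_dotProduct, Pi.smul_apply, col_apply, op_smul_eq_mul, mul_assoc]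

theorem comp_symm_dotProduct_reindex_mulVec {m n : Type*} [Fintype m] [Fintype n] (e : m ≃ n)
    (M : Matrix m m R) (v : m → R) :
    (v ∘ e.symm) ⬝ᵥ reindex e e M *ᵥ (v ∘ e.symm) = v ⬝ᵥ M *ᵥ v := by
  rw [reindex_apply, submatrix_mulVec_equiv, Equiv.symm_symm, Function.comp_assoc,
    e.symm_comp_self, Function.comp_id, comp_equiv_dotProduct_comp_equiv]

theorem sumElim_zero_dotProduct_fromBlocks_mulVec {l m : Type*} [Fintype l] [Fintype m]
    (A : Matrix l l R) (B : Matrix l m R) (C : Matrix m l R) (D : Matrix m m R) (w : l → R) :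
    Sum.elim w 0 ⬝ᵥ fromBlocks A B C D *ᵥ Sum.elim w 0 = w ⬝ᵥ A *ᵥ w := by
  simp [fromBlocks_mulVec, sumElim_dotProduct_sumElim]

end BlockMatrix

theorem Emat_apply_of_ne {N : ℕ} {i j : Fin N} (h : (i : ℕ) + j + 1 ≠ N) : Emat N i j = 0 :=
  if_neg h

theorem Emat_mul_apply {N : ℕ} (M : Matrix (Fin N) (Fin N) ℝ) (i j : Fin N) :
    (Emat N * M) i j = M i.rev j := by
  rw [mul_apply, Finset.sum_eq_single i.rev]
  · simp [Emat]; omega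
  · intro k _ hk
    rw [Emat_apply_of_ne (fun h => hk (Fin.ext (by simp; omega))), zero_mul]
  · simp

theorem exists_isotropic_Emat_two {τ β : ℝ} (hτβ : τ * β ≠ 0) (a : ℝ) :
    ∃ w : Fin 2 → ℝ, w ⬝ᵥ Emat 2 *ᵥ w = 0 ∧
      τ * (w ⬝ᵥ (Emat 2 * complexJordanBlock 2 a β) *ᵥ w) < 0 := by
  rcases hτβ.lt_or_gt with hneg | hpos
  · refine ⟨Pi.single 0 1, ?_, ?_⟩ <;>
      simp [Emat_mul_apply, Emat, complexJordanBlock, hneg]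
  · refine ⟨Pi.single 1 1, ?_, ?_⟩ <;>
      simp [Emat_mul_apply, Emat, complexJordanBlock, hpos]

theorem exists_isotropic_Emat_of_two_le {m : ℕ} (hm : 2 ≤ m) {τ β : ℝ} (hτ : τ ≠ 0)
    (hβ : β ≠ 0) (a : ℝ) :
    ∃ w : Fin (2 * m) → ℝ, w ⬝ᵥ Emat (2 * m) *ᵥ w = 0 ∧
      τ * (w ⬝ᵥ (Emat (2 * m) * complexJordanBlock (2 * m) a β) *ᵥ w) < 0 := by
  set i : Fin (2 * m) := ⟨0, by omega⟩
  set j : Fin (2 * m) := ⟨2 * m - 2, by omega⟩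
  have hE : ∀ k l : Fin (2 * m), k ∈ ({i, j} : Set _) → l ∈ ({i, j} : Set _) →
      Emat (2 * m) k l = 0 := by
    rintro k l (rfl | rfl) (rfl | rfl) <;> exact Emat_apply_of_ne (by simp [i, j]; omega)
  refine ⟨Pi.single i 1 + Pi.single j (-(τ * β)), ?_, ?_⟩
  · simp only [mulVec_add, dotProduct_add, add_dotProduct, single_dotProduct_mulVec_single]
    simp [hE]
  · simp only [mulVec_add, dotProduct_add, add_dotProduct, single_dotProduct_mulVec_single,
      Emat_mul_apply]
    have hii : complexJordanBlock (2 * m) a β i.rev i = 0 := by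
      simp only [complexJordanBlock, Fin.val_rev, i]; split_ifs <;> first | rfl | omega
    have hij : complexJordanBlock (2 * m) a β i.rev j = β := by
      simp only [complexJordanBlock, Fin.val_rev, i, j]; split_ifs <;> first | rfl | omega
    have hji : complexJordanBlock (2 * m) a β j.rev i = β := by
      simp only [complexJordanBlock, Fin.val_rev, i, j]; split_ifs <;> first | rfl | omega
    have hjj : complexJordanBlock (2 * m) a β j.rev j = 0 := by
      simp only [complexJordanBlock, Fin.val_rev, j]; split_ifs <;> first | rfl | omega
    rw [hii, hij, hji, hjj]
    have : 0 < (τ * β) ^ 2 := by positivity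
    nlinarith

theorem exists_isotropic_Emat {m : ℕ} (hm : 1 ≤ m) {τ β : ℝ} (hτ : τ ≠ 0) (hβ : β ≠ 0)
    (a : ℝ) :
    ∃ w : Fin (2 * m) → ℝ, w ⬝ᵥ Emat (2 * m) *ᵥ w = 0 ∧
      τ * (w ⬝ᵥ (Emat (2 * m) * complexJordanBlock (2 * m) a β) *ᵥ w) < 0 := by
  obtain rfl | hm2 := hm.eq_or_lt
  · exact exists_isotropic_Emat_two (mul_ne_zero hτ hβ) a
  · exact exists_isotropic_Emat_of_two_le hm2 hτ hβ a

theorem stmt_4_general (m r : ℕ) (hm : 1 ≤ m) (τ a β : ℝ) (hβ : β ≠ 0) (hτ : τ = 1 ∨ τ = -1)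
    (A' D' : Matrix (Fin r) (Fin r) ℝ)
    (A D : Matrix (Fin (2 * m + r)) (Fin (2 * m + r)) ℝ)
    (hA : A = Matrix.reindex finSumFinEquiv finSumFinEquiv
      (Matrix.fromBlocks (τ • Emat (2 * m)) 0 0 A'))
    (hD : D = Matrix.reindex finSumFinEquiv finSumFinEquiv
      (Matrix.fromBlocks (τ • (Emat (2 * m) * complexJordanBlock (2 * m) a β)) 0 0 D'))
    (b e : Fin (2 * m + r) → ℝ) (c : ℝ)
    (hslater : ∃ x : Fin (2 * m + r) → ℝ, (1/2) * (x ⬝ᵥ A.mulVec x) + b ⬝ᵥ x + c < 0) :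
    ∀ M : ℝ, ∃ x : Fin (2 * m + r) → ℝ,
      (1/2) * (x ⬝ᵥ A.mulVec x) + b ⬝ᵥ x + c ≤ 0 ∧
      (1/2) * (x ⬝ᵥ D.mulVec x) + e ⬝ᵥ x < M := by
  intro M
  obtain ⟨x, hx⟩ := hslater
  have hτ0 : τ ≠ 0 := by rcases hτ with rfl | rfl <;> norm_num
  obtain ⟨w, hwA, hwD⟩ := exists_isotropic_Emat hm hτ0 hβ a
  set d := Sum.elim w (0 : Fin r → ℝ) ∘ finSumFinEquiv.symm
  have hdA : d ⬝ᵥ A *ᵥ d = 0 := by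
    rw [hA, comp_symm_dotProduct_reindex_mulVec, sumElim_zero_dotProduct_fromBlocks_mulVec,
      smul_mulVec, dotProduct_smul, hwA, smul_zero]
  have hdD : d ⬝ᵥ D *ᵥ d < 0 := by
    rwa [hD, comp_symm_dotProduct_reindex_mulVec, sumElim_zero_dotProduct_fromBlocks_mulVec,
      smul_mulVec, dotProduct_smul, smul_eq_mul]
  simpa [quadFun] using exists_quadFun_nonpos_and_lt_of_isotropic A D b e c hx.le hdA hdD M

/-- Theorem 2.3 of Jiang–Li–Wu: if a type A block pair `(τ E_{2m}, τ E_{2m} J_c)` with a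
complex-type Jordan block `J_c` (associated with `a ± b i`, `b ≠ 0`) occurs in the canonical
form, then the GTRS `(P)` is unbounded from below (assuming the Slater condition). -/
theorem stmt_4 (m r : ℕ) (hm : 1 ≤ m) (τ a β : ℝ) (hβ : β ≠ 0) (hτ : τ = 1 ∨ τ = -1)
    (A' D' : Matrix (Fin r) (Fin r) ℝ) (hA' : A'.IsSymm) (hD' : D'.IsSymm)
    (A D : Matrix (Fin (2 * m + r)) (Fin (2 * m + r)) ℝ)
    (hA : A = Matrix.reindex finSumFinEquiv finSumFinEquiv
      (Matrix.fromBlocks (τ • Emat (2 * m)) 0 0 A'))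
    (hD : D = Matrix.reindex finSumFinEquiv finSumFinEquiv
      (Matrix.fromBlocks (τ • (Emat (2 * m) * complexJordanBlock (2 * m) a β)) 0 0 D'))
    (b e : Fin (2 * m + r) → ℝ) (c : ℝ)
    (hslater : ∃ x : Fin (2 * m + r) → ℝ, (1/2) * (x ⬝ᵥ A.mulVec x) + b ⬝ᵥ x + c < 0) :
    ∀ M : ℝ, ∃ x : Fin (2 * m + r) → ℝ,
      (1/2) * (x ⬝ᵥ A.mulVec x) + b ⬝ᵥ x + c ≤ 0 ∧
      (1/2) * (x ⬝ᵥ D.mulVec x) + e ⬝ᵥ x < M :=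
  stmt_4_general m r hm τ a β hβ hτ A' D' A D hA hD b e c hslater
end

section
/- Let τ ∈ {1,−1} and λ, e₁, e₂, π ∈ ℝ, and consider g(z₁,z₂) = τλz₁z₂ + ½τz₂² + e₁z₁ + e₂z₂ over all (z₁,z₂) ∈ ℝ² with τz₁z₂ ≤ π. If τ = −1, or (τ = 1 and λ > 0), or (τ = 1 and e₁ ≠ 0), then g is unbounded from below on this set: for every M ∈ ℝ there exists (z₁,z₂) with τz₁z₂ ≤ π and g(z₁,z₂) < M. -/
/-!
Each case is settled by a ray in the feasible set along which `g` tends to `-∞`.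
For `τ = -1` take `(1, t)`: the constraint `-t ≤ π` holds for large `t` and `g` is a
quadratic in `t` with leading coefficient `-1/2`. For `τ = 1` fix `z₂ = d` and take
`z₁ = -t d`: the constraint `-t d² ≤ π` holds for large `t` and `g` is affine in `t` with slope
`-d (λ d + e₁)`, which is negative for a suitable `d` as soon as `λ > 0` or `e₁ ≠ 0`.
-/

open Filter

noncomputable def objective (τ lam e₁ e₂ z₁ z₂ : ℝ) : ℝ :=
  τ * lam * (z₁ * z₂) + (1/2) * τ * z₂ ^ 2 + e₁ * z₁ + e₂ * z₂

lemma tendsto_affine_atBot {a : ℝ} (ha : a < 0) (b : ℝ) :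
    Tendsto (fun t : ℝ => a * t + b) atTop atBot :=
  tendsto_atBot_add_const_right _ b (tendsto_id.const_mul_atTop_of_neg ha)

lemma tendsto_quadratic_atBot {a : ℝ} (ha : a < 0) (b c : ℝ) :
    Tendsto (fun t : ℝ => a * t ^ 2 + b * t + c) atTop atBot := by
  have h : Tendsto (fun t : ℝ => t * (a * t + b)) atTop atBot :=
    tendsto_id.atTop_mul_atBot₀ (tendsto_affine_atBot ha b)
  exact tendsto_atBot_add_const_right _ c (h.congr fun t => by ring)

lemma exists_mul_mul_add_pos {lam e : ℝ} (h : 0 < lam ∨ e ≠ 0) :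
    ∃ d : ℝ, 0 < d * (lam * d + e) := by
  rcases h with hlam | he
  · refine ⟨1 + |e| / lam, ?_⟩
    have hd : lam * (1 + |e| / lam) + e = lam + (|e| + e) := by field_simp; ring
    rw [hd]
    exact mul_pos (by positivity) (by linarith [neg_abs_le e])
  · set ε := 1 / (|lam| + 1)
    have hε : 0 < ε := by positivity
    have hlamε : 0 < lam * ε + 1 := by
      have : |lam| * ε < 1 := by
        rw [mul_one_div, div_lt_one (by positivity)]
        linarith
      nlinarith [neg_abs_le lam]
    refine ⟨e * ε, ?_⟩
    have hd : e * ε * (lam * (e * ε) + e) = e ^ 2 * ε * (lam * ε + 1) := by ring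
    rw [hd]
    positivity

lemma objective_unbounded_of_neg (lam e₁ e₂ p M : ℝ) :
    ∃ z₁ z₂ : ℝ, -1 * (z₁ * z₂) ≤ p ∧ objective (-1) lam e₁ e₂ z₁ z₂ < M := by
  have hg : Tendsto (fun t : ℝ => -(1/2) * t ^ 2 + (e₂ - lam) * t + e₁) atTop atBot :=
    tendsto_quadratic_atBot (by norm_num) _ _
  obtain ⟨t, hfeas, hlt⟩ := ((eventually_ge_atTop (-p)).and (hg.eventually_lt_atBot M)).exists
  refine ⟨1, t, by linarith, ?_⟩
  unfold objective
  linarith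

lemma objective_unbounded_of_pos {lam e₁ : ℝ} (h : 0 < lam ∨ e₁ ≠ 0) (e₂ p M : ℝ) :
    ∃ z₁ z₂ : ℝ, 1 * (z₁ * z₂) ≤ p ∧ objective 1 lam e₁ e₂ z₁ z₂ < M := by
  obtain ⟨d, hd⟩ := exists_mul_mul_add_pos h
  have hd2 : 0 < d ^ 2 := by
    have : d ≠ 0 := by rintro rfl; simp at hd
    positivity
  have hg : Tendsto (fun t : ℝ => -(d * (lam * d + e₁)) * t + ((1/2) * d ^ 2 + e₂ * d))
      atTop atBot :=
    tendsto_affine_atBot (neg_lt_zero.mpr hd) _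
  obtain ⟨t, hfeas, hlt⟩ :=
    ((eventually_ge_atTop (-p / d ^ 2)).and (hg.eventually_lt_atBot M)).exists
  refine ⟨-(t * d), d, ?_, ?_⟩
  · rw [div_le_iff₀ hd2] at hfeas
    linarith
  · unfold objective
    linarith

theorem stmt_8_general (τ lam e₁ e₂ p : ℝ)
    (hcase : τ = -1 ∨ (τ = 1 ∧ 0 < lam) ∨ (τ = 1 ∧ e₁ ≠ 0)) :
    ∀ M : ℝ, ∃ z₁ z₂ : ℝ, τ * (z₁ * z₂) ≤ p ∧
      τ * lam * (z₁ * z₂) + (1/2) * τ * z₂ ^ 2 + e₁ * z₁ + e₂ * z₂ < M := by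
  intro M
  rcases hcase with rfl | ⟨rfl, hlam⟩ | ⟨rfl, he₁⟩
  · exact objective_unbounded_of_neg lam e₁ e₂ p M
  · exact objective_unbounded_of_pos (Or.inl hlam) e₂ p M
  · exact objective_unbounded_of_pos (Or.inr he₁) e₂ p M

/-- Theorem 2.5, case 3 (unbounded) of Jiang–Li–Wu:
for `g(z₁,z₂) = τλ z₁ z₂ + ½τ z₂² + e₁ z₁ + e₂ z₂` over `{τ z₁ z₂ ≤ π}`,
if `τ = −1`, or `τ = 1 ∧ λ > 0`, or `τ = 1 ∧ e₁ ≠ 0`, then `g` is unbounded from below. -/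
theorem stmt_8 (τ lam e₁ e₂ p : ℝ) (hτ : τ = 1 ∨ τ = -1)
    (hcase : τ = -1 ∨ (τ = 1 ∧ 0 < lam) ∨ (τ = 1 ∧ e₁ ≠ 0)) :
    ∀ M : ℝ, ∃ z₁ z₂ : ℝ, τ * (z₁ * z₂) ≤ p ∧
      τ * lam * (z₁ * z₂) + (1/2) * τ * z₂ ^ 2 + e₁ * z₁ + e₂ * z₂ < M :=
  stmt_8_general τ lam e₁ e₂ p hcase
end
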